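/- Let E₀ be a real Hilbert space, R > 0, ψ : ℝ → ℝ a C^∞ function with 0 ≤ ψ ≤ 1 and ψ(s) = 0 for all |s| ≤ R/2, and let c, α, η be real numbers. Define σ̂ : E₀ → L(E₀,E₀) by σ̂(0) = 0 and, for x ≠ 0, σ̂(x) = c·ψ(‖x‖)·‖x‖^η·( I − α‖x‖^{-2}·x⊗x ), where (x⊗x)(v) = ⟨x,v⟩x and I is the identity operator on E₀. Then σ̂ is twice continuously Fréchet differentiable on all of E₀, and σ̂, Dσ̂ and D²σ̂ are bounded on every ball of E₀. -/

import Mathlib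

set_option maxSynthPendingDepth 2

open scoped InnerProductSpace

/-- The cutoff noise coefficient
`σ̂(x) = c ψ(‖x‖) ‖x‖^η (I − α ‖x‖⁻² x⊗x)` on a real Hilbert space, where
`(x⊗x)(v) = ⟨x,v⟩ x`.  (When `ψ` vanishes on `[-R/2, R/2]` this gives `σ̂(0) = 0`.) -/
noncomputable def stmt8Sigma {E₀ : Type*} [NormedAddCommGroup E₀] [InnerProductSpace ℝ E₀]
    (ψ : ℝ → ℝ) (c α η : ℝ) (x : E₀) : E₀ →L[ℝ] E₀ :=
  (c * ψ ‖x‖ * ‖x‖ ^ η) •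
    (ContinuousLinearMap.id ℝ E₀ - (α * ‖x‖ ^ (-2 : ℝ)) • (innerSL ℝ x).smulRight x)


section BilinDiag

variable {E F : Type*} [NormedAddCommGroup E] [NormedSpace ℝ E]
  [NormedAddCommGroup F] [NormedSpace ℝ F]

lemma bilinDiag_contDiff (b : E →L[ℝ] E →L[ℝ] F) {n : WithTop ℕ∞} :
    ContDiff ℝ n (fun x => b x x) :=
  b.isBoundedBilinearMap.contDiff.comp (ContDiff.prodMk contDiff_id contDiff_id)

lemma bilinDiag_hasFDerivAt (b : E →L[ℝ] E →L[ℝ] F) (x : E) :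
    HasFDerivAt (fun y => b y y) ((b + b.flip) x) x := by
  have h3 : HasFDerivAt (fun y => b y y)
      ((b x).comp (ContinuousLinearMap.id ℝ E) + b.flip x) x :=
    b.hasFDerivAt.clm_apply (hasFDerivAt_id x)
  have e : (b + b.flip) x = (b x).comp (ContinuousLinearMap.id ℝ E) + b.flip x := by
    ext v
    simp
  exact e ▸ h3

lemma norm_iFD_one_eq (f : E → F) (x : E) :
    ‖iteratedFDeriv ℝ 1 f x‖ = ‖fderiv ℝ f x‖ := by
  rw [← norm_iteratedFDeriv_zero (𝕜 := ℝ) (f := fderiv ℝ f) (x := x)]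
  exact (norm_iteratedFDeriv_fderiv (n := 0)).symm

lemma norm_iFD_two_eq (f : E → F) (x : E) :
    ‖iteratedFDeriv ℝ 2 f x‖ = ‖fderiv ℝ (fderiv ℝ f) x‖ := by
  rw [← norm_iFD_one_eq]
  exact (norm_iteratedFDeriv_fderiv (n := 1)).symm

lemma bilinDiag_fderiv (b : E →L[ℝ] E →L[ℝ] F) :
    fderiv ℝ (fun y => b y y) = fun x => (b + b.flip) x :=
  funext fun x => (bilinDiag_hasFDerivAt b x).fderiv

lemma bilinDiag_iFD1 (b : E →L[ℝ] E →L[ℝ] F) (x : E) :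
    ‖iteratedFDeriv ℝ 1 (fun y => b y y) x‖ ≤ 2 * ‖b‖ * ‖x‖ := by
  rw [norm_iFD_one_eq, bilinDiag_fderiv]
  calc ‖(b + b.flip) x‖ ≤ ‖b + b.flip‖ * ‖x‖ := ContinuousLinearMap.le_opNorm _ _
  _ ≤ (‖b‖ + ‖b.flip‖) * ‖x‖ := by
      gcongr
      exact norm_add_le _ _
  _ = 2 * ‖b‖ * ‖x‖ := by rw [ContinuousLinearMap.opNorm_flip]; ring

lemma bilinDiag_iFD2 (b : E →L[ℝ] E →L[ℝ] F) (x : E) :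
    ‖iteratedFDeriv ℝ 2 (fun y => b y y) x‖ ≤ 2 * ‖b‖ := by
  rw [norm_iFD_two_eq, bilinDiag_fderiv]
  have e : fderiv ℝ (fun x => (b + b.flip) x) x = b + b.flip := (b + b.flip).fderiv
  rw [e]
  calc ‖b + b.flip‖ ≤ ‖b‖ + ‖b.flip‖ := norm_add_le _ _
  _ = 2 * ‖b‖ := by rw [ContinuousLinearMap.opNorm_flip]; ring

end BilinDiag

section Scalar

/-- smoothness of the scalar factor -/
lemma cutoff_contDiff {R : ℝ} (hR : 0 < R) {ψ : ℝ → ℝ} (hψ : ContDiff ℝ (⊤ : ℕ∞) ψ)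
    (hψzero : ∀ s : ℝ, |s| ≤ R / 2 → ψ s = 0) (c κ : ℝ) :
    ContDiff ℝ 2 (fun t : ℝ => c * (ψ (Real.sqrt t) * t ^ κ)) := by
  rw [contDiff_iff_contDiffAt]
  intro t₀
  rcases lt_or_ge t₀ ((R / 2) ^ 2) with hlt | hge
  · refine ContDiffAt.congr_of_eventuallyEq (contDiffAt_const (c := 0)) ?_
    filter_upwards [Iio_mem_nhds hlt] with s hs
    have hsq : Real.sqrt s ≤ R / 2 := by
      have h1 : Real.sqrt s ≤ Real.sqrt ((R / 2) ^ 2) := Real.sqrt_le_sqrt (le_of_lt hs)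
      rwa [Real.sqrt_sq (by positivity)] at h1
    have h0 : ψ (Real.sqrt s) = 0 := hψzero _ (by rwa [abs_of_nonneg (Real.sqrt_nonneg s)])
    simp [h0]
  · have ht₀ : (0 : ℝ) < t₀ := lt_of_lt_of_le (by positivity) hge
    have h1 : ContDiffAt ℝ 2 (fun t : ℝ => ψ (Real.sqrt t)) t₀ :=
      ContDiffAt.comp t₀ ((hψ.of_le (WithTop.coe_le_coe.mpr le_top)).contDiffAt) (Real.contDiffAt_sqrt ht₀.ne')
    exact contDiffAt_const.mul (h1.mul (Real.contDiffAt_rpow_const_of_ne ht₀.ne'))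

/-- bounds for iterated derivatives of a `C²` scalar function on a compact interval -/
lemma scalar_iFD_bound (g : ℝ → ℝ) (hg : ContDiff ℝ 2 g) (r : ℝ) :
    ∃ C : ℝ, 0 ≤ C ∧ ∀ i : ℕ, i ≤ 2 → ∀ t ∈ Set.Icc (0 : ℝ) r,
      ‖iteratedFDeriv ℝ i g t‖ ≤ C := by
  have hcont : ∀ i : ℕ, i ≤ 2 → ContinuousOn (iteratedFDeriv ℝ i g) (Set.Icc (0 : ℝ) r) :=
    fun i hi => (ContDiff.continuous_iteratedFDeriv (by exact_mod_cast hi) hg).continuousOn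
  obtain ⟨C0, hC0⟩ := (isCompact_Icc (a := (0:ℝ)) (b := r)).exists_bound_of_continuousOn
    (hcont 0 (by norm_num))
  obtain ⟨C1, hC1⟩ := (isCompact_Icc (a := (0:ℝ)) (b := r)).exists_bound_of_continuousOn
    (hcont 1 (by norm_num))
  obtain ⟨C2, hC2⟩ := (isCompact_Icc (a := (0:ℝ)) (b := r)).exists_bound_of_continuousOn
    (hcont 2 (by norm_num))
  have habs : C0 ≤ |C0| + |C1| + |C2| ∧ C1 ≤ |C0| + |C1| + |C2| ∧ C2 ≤ |C0| + |C1| + |C2| := by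
    refine ⟨?_, ?_, ?_⟩ <;>
      linarith [le_abs_self C0, le_abs_self C1, le_abs_self C2,
        abs_nonneg C0, abs_nonneg C1, abs_nonneg C2]
  refine ⟨|C0| + |C1| + |C2|, by positivity, ?_⟩
  intro i hi t ht
  interval_cases i
  · exact (hC0 t ht).trans habs.1
  · exact (hC1 t ht).trans habs.2.1
  · exact (hC2 t ht).trans habs.2.2

end Scalar

section Decomp

variable {E₀ : Type*} [NormedAddCommGroup E₀] [InnerProductSpace ℝ E₀]

/-- the real inner product as a continuous bilinear map -/
noncomputable def myBq (E₀ : Type*) [NormedAddCommGroup E₀] [InnerProductSpace ℝ E₀] :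
    E₀ →L[ℝ] E₀ →L[ℝ] ℝ :=
  (isBoundedBilinearMap_inner (𝕜 := ℝ) (E := E₀)).toContinuousLinearMap

lemma myBq_apply (x y : E₀) : myBq E₀ x y = ⟪x, y⟫_ℝ := rfl

/-- `x ⊗ x` as a continuous bilinear map -/
noncomputable def myBT (E₀ : Type*) [NormedAddCommGroup E₀] [InnerProductSpace ℝ E₀] :
    E₀ →L[ℝ] E₀ →L[ℝ] (E₀ →L[ℝ] E₀) :=
  (ContinuousLinearMap.smulRightL ℝ E₀ E₀).comp (myBq E₀)

lemma myBT_apply (x : E₀) : myBT E₀ x x = (innerSL ℝ x).smulRight x := by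
  have h : myBq E₀ x = innerSL ℝ x := by
    ext v
    rfl
  rw [myBT, ContinuousLinearMap.comp_apply, h]
  rfl

/-- the scalar coefficient -/
noncomputable def myG (ψ : ℝ → ℝ) (c κ t : ℝ) : ℝ := c * (ψ (Real.sqrt t) * t ^ κ)

lemma sigma_key {R : ℝ} (hR : 0 < R) (ψ : ℝ → ℝ)
    (hψzero : ∀ s : ℝ, |s| ≤ R / 2 → ψ s = 0) (c α η : ℝ) :
    stmt8Sigma (E₀ := E₀) ψ c α η =
      (fun x => myG ψ c (η / 2) (myBq E₀ x x) • ContinuousLinearMap.id ℝ E₀) +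
      (fun x => myG ψ (-(c * α)) (η / 2 - 1) (myBq E₀ x x) • myBT E₀ x x) := by
  have hψ0 : ψ 0 = 0 := hψzero 0 (by simp; positivity)
  funext x
  simp only [Pi.add_apply]
  by_cases hx : x = 0
  · subst hx
    simp [stmt8Sigma, myG, myBq_apply, inner_zero_left, Real.sqrt_zero, hψ0]
  · have hpos : (0 : ℝ) < ‖x‖ := norm_pos_iff.mpr hx
    have e1 : Real.sqrt (‖x‖ ^ 2) = ‖x‖ := Real.sqrt_sq (norm_nonneg x)
    have e2 : ((‖x‖ : ℝ) ^ 2) ^ (η / 2 : ℝ) = ‖x‖ ^ η := by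
      rw [← Real.rpow_natCast ‖x‖ 2, ← Real.rpow_mul (norm_nonneg x)]
      congr 1
      push_cast
      ring
    have e3 : ((‖x‖ : ℝ) ^ 2) ^ (η / 2 - 1 : ℝ) = ‖x‖ ^ (η - 2 : ℝ) := by
      rw [← Real.rpow_natCast ‖x‖ 2, ← Real.rpow_mul (norm_nonneg x)]
      congr 1
      push_cast
      ring
    have e4 : ‖x‖ ^ η * ‖x‖ ^ (-2 : ℝ) = ‖x‖ ^ (η - 2 : ℝ) := by
      rw [← Real.rpow_add hpos, show η + -2 = η - 2 by ring]
    rw [myBT_apply, myBq_apply, real_inner_self_eq_norm_sq]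
    unfold stmt8Sigma myG
    rw [e1, e2, e3, smul_sub, smul_smul, sub_eq_add_neg, ← neg_smul]
    congr 1
    · congr 1
      ring
    · congr 1
      rw [← e4]
      ring
end Decomp


set_option maxHeartbeats 2000000

/-- For `ψ` smooth with `0 ≤ ψ ≤ 1` and `ψ ≡ 0` on `[-R/2, R/2]`
(`R > 0`), the map `σ̂` is twice continuously Fréchet differentiable on `E₀`, and
`σ̂`, `Dσ̂`, `D²σ̂` are bounded on every ball. -/
theorem stmt_8
    {E₀ : Type*} [NormedAddCommGroup E₀] [InnerProductSpace ℝ E₀] [CompleteSpace E₀]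
    (R : ℝ) (hR : 0 < R)
    (ψ : ℝ → ℝ) (hψsmooth : ContDiff ℝ (⊤ : ℕ∞) ψ)
    (hψrange : ∀ s : ℝ, ψ s ∈ Set.Icc (0 : ℝ) 1)
    (hψzero : ∀ s : ℝ, |s| ≤ R / 2 → ψ s = 0)
    (c α η : ℝ) :
    ContDiff ℝ 2 (stmt8Sigma (E₀ := E₀) ψ c α η) ∧
    (∀ r : ℝ, 0 < r → ∃ C : ℝ, ∀ z : E₀, ‖z‖ ≤ r → ‖stmt8Sigma (E₀ := E₀) ψ c α η z‖ ≤ C) ∧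
    (∀ r : ℝ, 0 < r → ∃ C : ℝ, ∀ z : E₀, ‖z‖ ≤ r →
      ‖fderiv ℝ (stmt8Sigma (E₀ := E₀) ψ c α η) z‖ ≤ C) ∧
    (∀ r : ℝ, 0 < r → ∃ C : ℝ, ∀ z : E₀, ‖z‖ ≤ r →
      ‖fderiv ℝ (fderiv ℝ (stmt8Sigma (E₀ := E₀) ψ c α η)) z‖ ≤ C) := by
  have key := sigma_key (E₀ := E₀) hR ψ hψzero c α η
  have hg : ContDiff ℝ 2 (myG ψ c (η / 2)) := cutoff_contDiff hR hψsmooth hψzero c (η / 2)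
  have hh : ContDiff ℝ 2 (myG ψ (-(c * α)) (η / 2 - 1)) :=
    cutoff_contDiff hR hψsmooth hψzero _ _
  have hq : ContDiff ℝ 2 (fun x : E₀ => myBq E₀ x x) := bilinDiag_contDiff _
  have hTc : ContDiff ℝ 2 (fun x : E₀ => myBT E₀ x x) := bilinDiag_contDiff _
  have hF1 : ContDiff ℝ 2 (fun x : E₀ => myG ψ c (η / 2) (myBq E₀ x x) •
      ContinuousLinearMap.id ℝ E₀) := (hg.comp hq).smul contDiff_const
  have hF2 : ContDiff ℝ 2 (fun x : E₀ =>
      myG ψ (-(c * α)) (η / 2 - 1) (myBq E₀ x x) • myBT E₀ x x) := (hh.comp hq).smul hTc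
  have hσ : ContDiff ℝ 2 (stmt8Sigma (E₀ := E₀) ψ c α η) := by
    rw [key]; exact hF1.add hF2
  have master : ∀ r : ℝ, 0 < r → ∃ C : ℝ, ∀ n : ℕ, n ≤ 2 → ∀ z : E₀, ‖z‖ ≤ r →
      ‖iteratedFDeriv ℝ n (stmt8Sigma (E₀ := E₀) ψ c α η) z‖ ≤ C := by
    intro r hr
    obtain ⟨Cg, hCg0, hCg⟩ := scalar_iFD_bound _ hg (r ^ 2)
    obtain ⟨Ch, hCh0, hCh⟩ := scalar_iFD_bound _ hh (r ^ 2)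
    set Kq : ℝ := ‖myBq E₀‖ with hKq
    have hKq0 : 0 ≤ Kq := by rw [hKq]; exact norm_nonneg (myBq E₀)
    set KT : ℝ := ‖myBT E₀‖ with hKT
    have hKT0 : 0 ≤ KT := by rw [hKT]; exact norm_nonneg (myBT E₀)
    set D : ℝ := 2 * Kq * (r + 1) + 1 with hD
    have hD1 : 1 ≤ D := by
      rw [hD]
      nlinarith [mul_nonneg hKq0 (show (0:ℝ) ≤ r + 1 by linarith)]
    have hD0 : 0 ≤ D := by linarith
    have hmem : ∀ z : E₀, ‖z‖ ≤ r → myBq E₀ z z ∈ Set.Icc (0 : ℝ) (r ^ 2) := by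
      intro z hz
      rw [myBq_apply, real_inner_self_eq_norm_sq]
      exact ⟨by positivity, pow_le_pow_left₀ (norm_nonneg z) hz 2⟩
    have hqD : ∀ i : ℕ, 1 ≤ i → i ≤ 2 → ∀ z : E₀, ‖z‖ ≤ r →
        ‖iteratedFDeriv ℝ i (fun x : E₀ => myBq E₀ x x) z‖ ≤ D ^ i := by
      intro i h1 h2 z hz
      interval_cases i
      · refine (bilinDiag_iFD1 _ z).trans ?_
        rw [pow_one, hD]
        nlinarith [mul_nonneg hKq0 (show (0:ℝ) ≤ r + 1 - ‖z‖ by linarith)]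
      · refine (bilinDiag_iFD2 _ z).trans ?_
        rw [hD]
        nlinarith [sq_nonneg (2 * Kq * (r + 1)), mul_nonneg hKq0 hr.le, hKq0]
    have hcomp : ∀ (φ : ℝ → ℝ) (Cφ : ℝ), 0 ≤ Cφ → ∀ (hφ : ContDiff ℝ 2 φ),
        (∀ i : ℕ, i ≤ 2 → ∀ t ∈ Set.Icc (0:ℝ) (r ^ 2), ‖iteratedFDeriv ℝ i φ t‖ ≤ Cφ) →
        ∀ n : ℕ, n ≤ 2 → ∀ z : E₀, ‖z‖ ≤ r →
        ‖iteratedFDeriv ℝ n (fun x : E₀ => φ (myBq E₀ x x)) z‖ ≤ 2 * Cφ * D ^ 2 := by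
      intro φ Cφ hCφ0 hφ hCφ n hn z hz
      have h := norm_iteratedFDeriv_comp_le (g := φ) (f := fun x : E₀ => myBq E₀ x x)
        hφ hq (by exact_mod_cast hn) z
        (C := Cφ) (D := D)
        (fun i hi => hCφ i (hi.trans hn) _ (hmem z hz))
        (fun i hi1 hi2 => hqD i hi1 (hi2.trans hn) z hz)
      have hfac : ((Nat.factorial n : ℕ) : ℝ) ≤ 2 := by
        interval_cases n <;> norm_num [Nat.factorial]
      have hpow : D ^ n ≤ D ^ 2 := by
        interval_cases n
        · nlinarith
        · nlinarith
        · exact le_refl _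
      have hrest : ((Nat.factorial n : ℕ) : ℝ) * Cφ * D ^ n ≤ 2 * Cφ * D ^ 2 :=
        mul_le_mul (mul_le_mul_of_nonneg_right hfac hCφ0) hpow (pow_nonneg hD0 n)
          (mul_nonneg (by norm_num) hCφ0)
      exact le_trans h hrest
    set MT : ℝ := KT * r * r + 2 * KT * r + 2 * KT with hMT
    have hMT0 : 0 ≤ MT := by
      rw [hMT]
      nlinarith [mul_nonneg (mul_nonneg hKT0 hr.le) hr.le, mul_nonneg hKT0 hr.le, hKT0]
    have hTb : ∀ j : ℕ, j ≤ 2 → ∀ z : E₀, ‖z‖ ≤ r →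
        ‖iteratedFDeriv ℝ j (fun x : E₀ => myBT E₀ x x) z‖ ≤ MT := by
      intro j hj z hz
      have hz0 := norm_nonneg z
      interval_cases j
      · rw [norm_iteratedFDeriv_zero, hMT]
        have h0 := ContinuousLinearMap.le_opNorm₂ (myBT E₀) z z
        nlinarith [mul_le_mul hz hz hz0 hr.le, mul_nonneg hKT0 hz0, mul_nonneg hKT0 hr.le,
          mul_le_mul_of_nonneg_left (mul_le_mul hz hz hz0 hr.le) hKT0]
      · have h1 := bilinDiag_iFD1 (myBT E₀) z
        rw [hMT]
        nlinarith [mul_nonneg (mul_nonneg hKT0 hr.le) hr.le,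
          mul_nonneg hKT0 (show (0:ℝ) ≤ r - ‖z‖ by linarith), hKT0]
      · have h2 := bilinDiag_iFD2 (myBT E₀) z
        rw [hMT]
        nlinarith [mul_nonneg (mul_nonneg hKT0 hr.le) hr.le, mul_nonneg hKT0 hr.le]
    have hid : ∀ j : ℕ, ∀ z : E₀,
        ‖iteratedFDeriv ℝ j (fun _ : E₀ => ContinuousLinearMap.id ℝ E₀) z‖ ≤ 1 := by
      intro j z
      cases j with
      | zero => rw [norm_iteratedFDeriv_zero]; exact ContinuousLinearMap.norm_id_le
      | succ m =>
        rw [iteratedFDeriv_const_of_ne (Nat.succ_ne_zero m)]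
        simp
    have sum_step : ∀ (n : ℕ), n ≤ 2 → ∀ (u v : ℕ → ℝ) (A B : ℝ), 0 ≤ A → 0 ≤ B →
        (∀ i, i ≤ n → u i ≤ A) → (∀ i, i ≤ n → v i ≤ B) →
        (∀ i, 0 ≤ u i) → (∀ i, 0 ≤ v i) →
        ∑ i ∈ Finset.range (n + 1), (n.choose i : ℝ) * u i * v i ≤ 4 * (A * B) := by
      intro n hn u v A B hA hB hu hv hu0 hv0
      have h1 : ∑ i ∈ Finset.range (n + 1), (n.choose i : ℝ) * u i * v i ≤
          ∑ i ∈ Finset.range (n + 1), (n.choose i : ℝ) * (A * B) := by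
        refine Finset.sum_le_sum fun i hi => ?_
        have hi' : i ≤ n := Nat.lt_succ_iff.mp (Finset.mem_range.mp hi)
        have huv : u i * v i ≤ A * B :=
          mul_le_mul (hu i hi') (hv i hi') (hv0 i) hA
        have hc : (0:ℝ) ≤ (n.choose i : ℝ) := Nat.cast_nonneg _
        calc (n.choose i : ℝ) * u i * v i = (n.choose i : ℝ) * (u i * v i) := by ring
        _ ≤ (n.choose i : ℝ) * (A * B) := mul_le_mul_of_nonneg_left huv hc
      refine h1.trans ?_
      rw [← Finset.sum_mul]
      have h2 : ∑ i ∈ Finset.range (n + 1), (n.choose i : ℝ) = (2 : ℝ) ^ n := by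
        rw [← Nat.cast_sum, Nat.sum_range_choose]
        push_cast
        ring
      rw [h2]
      have h3 : (2:ℝ) ^ n ≤ 4 := by interval_cases n <;> norm_num
      nlinarith [mul_nonneg hA hB]
    refine ⟨4 * (2 * Cg * D ^ 2 * 1) + 4 * (2 * Ch * D ^ 2 * MT), ?_⟩
    intro n hn z hz
    rw [key]
    rw [iteratedFDeriv_add_apply (hF1.of_le (m := (n : WithTop ℕ∞)) (by exact_mod_cast hn)).contDiffAt
      (hF2.of_le (m := (n : WithTop ℕ∞)) (by exact_mod_cast hn)).contDiffAt]
    have hCg0' : (0:ℝ) ≤ 2 * Cg * D ^ 2 :=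
      mul_nonneg (mul_nonneg (by norm_num) hCg0) (pow_nonneg hD0 2)
    have hCh0' : (0:ℝ) ≤ 2 * Ch * D ^ 2 :=
      mul_nonneg (mul_nonneg (by norm_num) hCh0) (pow_nonneg hD0 2)
    have t1 : ‖iteratedFDeriv ℝ n (fun x : E₀ => myG ψ c (η / 2) (myBq E₀ x x) •
        ContinuousLinearMap.id ℝ E₀) z‖ ≤ 4 * (2 * Cg * D ^ 2 * 1) := by
      have hs := norm_iteratedFDeriv_smul_le (𝕜 := ℝ)
        (f := fun x : E₀ => myG ψ c (η / 2) (myBq E₀ x x))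
        (g := fun _ : E₀ => ContinuousLinearMap.id ℝ E₀)
        (hg.comp hq) contDiff_const z (n := n) (by exact_mod_cast hn)
      refine hs.trans ?_
      exact sum_step n hn _ _ (2 * Cg * D ^ 2) 1 hCg0' zero_le_one
        (fun i hi => hcomp _ Cg hCg0 hg hCg i (hi.trans hn) z hz)
        (fun i hi => hid (n - i) z) (fun i => norm_nonneg _) (fun i => norm_nonneg _)
    have t2 : ‖iteratedFDeriv ℝ n (fun x : E₀ =>
        myG ψ (-(c * α)) (η / 2 - 1) (myBq E₀ x x) • myBT E₀ x x) z‖ ≤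
        4 * (2 * Ch * D ^ 2 * MT) := by
      have hs := norm_iteratedFDeriv_smul_le (𝕜 := ℝ)
        (f := fun x : E₀ => myG ψ (-(c * α)) (η / 2 - 1) (myBq E₀ x x))
        (g := fun x : E₀ => myBT E₀ x x)
        (hh.comp hq) hTc z (n := n) (by exact_mod_cast hn)
      refine hs.trans ?_
      exact sum_step n hn _ _ (2 * Ch * D ^ 2) MT hCh0' hMT0
        (fun i hi => hcomp _ Ch hCh0 hh hCh i (hi.trans hn) z hz)
        (fun i hi => hTb (n - i) (le_trans (Nat.sub_le n i) hn) z hz)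
        (fun i => norm_nonneg _) (fun i => norm_nonneg _)
    exact (norm_add_le _ _).trans (add_le_add t1 t2)
  refine ⟨hσ, ?_, ?_, ?_⟩
  · intro r hr
    obtain ⟨C, hC⟩ := master r hr
    refine ⟨C, fun z hz => ?_⟩
    have h0 := hC 0 (by norm_num) z hz
    rwa [norm_iteratedFDeriv_zero] at h0
  · intro r hr
    obtain ⟨C, hC⟩ := master r hr
    refine ⟨C, fun z hz => ?_⟩
    have h1 := hC 1 (by norm_num) z hz
    rwa [norm_iFD_one_eq] at h1
  · intro r hr
    obtain ⟨C, hC⟩ := master r hr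
    refine ⟨C, fun z hz => ?_⟩
    have h2 := hC 2 (by norm_num) z hz
    rwa [norm_iFD_two_eq] at h2
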